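/- Let E¹ be the meet-semilattice with elements ⊥, ⊤ and p_i (i ∈ ℕ), ordered by ⊥ ≤ p_i ≤ ⊤ for all i with the p_i pairwise incomparable (so p_i ⊓ p_j = ⊥ for i ≠ j, and ⊤ is a greatest element). Then the character η of E¹ defined by η ⊤ = true and η e = false for all e ≠ ⊤ is a tight character (it lies in the closure of the set of ultracharacters) but is not an ultracharacter; in particular Ê¹_∞ is a proper subset of Ê¹_tight. -/

import Mathlib

/-- The semilattice `E¹` with elements `⊥`, `⊤` and `p_i` (`i ∈ ℕ`). -/
inductive E1 where
  | bot : E1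
  | top : E1
  | p : ℕ → E1
deriving DecidableEq

/-- The meet of `E¹`: `⊤` is a unit for `⊓`, `p i ⊓ p i = p i`,
`p i ⊓ p j = ⊥` for `i ≠ j`, and `⊥` is absorbing. -/
def einf1 : E1 → E1 → E1
  | E1.top, x => x
  | x, E1.top => x
  | E1.p i, E1.p j => if i = j then E1.p i else E1.bot
  | _, _ => E1.bot

/-- A character of `E¹`. -/
def IsCharE1 (ξ : E1 → Bool) : Prop :=
  (∀ e f, ξ (einf1 e f) = (ξ e && ξ f)) ∧ ξ E1.bot = false ∧ ∃ e, ξ e = true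

/-- An ultracharacter of `E¹`: a character maximal in the pointwise order. -/
def IsUltraE1 (ξ : E1 → Bool) : Prop :=
  IsCharE1 ξ ∧ ∀ η : E1 → Bool, IsCharE1 η →
    (∀ e, ξ e = true → η e = true) → η = ξ

/-- The character `η` taking value `true` exactly at `⊤`. -/
def etaTop : E1 → Bool := fun e => decide (e = E1.top)

/-!
The ultracharacters `xiP n`, supported at `⊤` and `p n`, differ from `η` only at `p n`; as `n → ∞`
every fixed coordinate is eventually left alone, so `xiP n → η` pointwise and `η` is tight.
On the other hand `η < xiP 0`, so `η` is not maximal.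
-/

open Filter Topology

def xiP (n : ℕ) : E1 → Bool := fun e => decide (e = E1.top ∨ e = E1.p n)

lemma isCharE1_etaTop : IsCharE1 etaTop := by
  refine ⟨?_, rfl, E1.top, rfl⟩
  rintro (_ | _ | i) (_ | _ | j) <;> simp [einf1, etaTop]
  split_ifs <;> simp

lemma isCharE1_xiP (n : ℕ) : IsCharE1 (xiP n) := by
  refine ⟨?_, rfl, E1.top, by simp [xiP]⟩
  rintro (_ | _ | i) (_ | _ | j) <;> simp [einf1, xiP, apply_ite]
  grind

lemma isUltraE1_xiP (n : ℕ) : IsUltraE1 (xiP n) := by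
  refine ⟨isCharE1_xiP n, fun η ⟨hmul, hbot, _⟩ hle => ?_⟩
  have htop : η E1.top = true := hle _ (by simp [xiP])
  have hpn : η (E1.p n) = true := hle _ (by simp [xiP])
  funext e
  rcases e with _ | _ | i
  · simp [xiP, hbot]
  · simp [xiP, htop]
  · by_cases hin : i = n
    · simp [xiP, hin, hpn]
    · have hpi : η (E1.p i) = false := by
        simpa [einf1, hin, hbot, hpn] using hmul (E1.p i) (E1.p n)
      simp [xiP, hin, hpi]

lemma not_isUltraE1_of_lt {ξ η : E1 → Bool} (hη : IsCharE1 η)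
    (hle : ∀ e, ξ e = true → η e = true) (hne : η ≠ ξ) : ¬ IsUltraE1 ξ :=
  fun hξ => hne (hξ.2 η hη hle)

lemma not_isUltraE1_etaTop : ¬ IsUltraE1 etaTop := by
  refine not_isUltraE1_of_lt (isCharE1_xiP 0) (fun e he => ?_) fun h => ?_
  · simp_all [etaTop, xiP]
  · simpa [xiP, etaTop] using congrFun h (E1.p 0)

lemma xiP_apply_of_ne {n : ℕ} {e : E1} (he : e ≠ E1.p n) : xiP n e = etaTop e := by
  simp [xiP, etaTop, he]

lemma tendsto_xiP_etaTop : Tendsto xiP atTop (𝓝 etaTop) := by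
  refine tendsto_pi_nhds.2 fun e => tendsto_nhds_of_eventually_eq ?_
  have hne : ∀ᶠ n in atTop, e ≠ E1.p n := by
    rcases e with _ | _ | i
    · exact Eventually.of_forall fun _ => E1.noConfusion
    · exact Eventually.of_forall fun _ => E1.noConfusion
    · filter_upwards [eventually_ne_atTop i] with n hn
      simpa using Ne.symm hn
  filter_upwards [hne] with n hn using xiP_apply_of_ne hn

lemma etaTop_mem_closure_ultra : etaTop ∈ closure {ξ : E1 → Bool | IsUltraE1 ξ} :=
  mem_closure_of_tendsto tendsto_xiP_etaTop (Eventually.of_forall isUltraE1_xiP)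

/-- the character `η` of `E¹` supported at `⊤` is a tight character
(it lies in the closure of the ultracharacters) but not an ultracharacter; in
particular `Ê¹_∞ ⊊ Ê¹_tight`. -/
theorem etaTop_tight_not_ultra :
    IsCharE1 etaTop ∧
    etaTop ∈ closure {ξ : E1 → Bool | IsUltraE1 ξ} ∧
    ¬ IsUltraE1 etaTop ∧
    {ξ : E1 → Bool | IsUltraE1 ξ} ⊂
      ({ξ : E1 → Bool | IsCharE1 ξ} ∩ closure {ξ : E1 → Bool | IsUltraE1 ξ}) := by
  have hsub : {ξ : E1 → Bool | IsUltraE1 ξ} ⊆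
      {ξ | IsCharE1 ξ} ∩ closure {ξ | IsUltraE1 ξ} := fun ξ hξ => ⟨hξ.1, subset_closure hξ⟩
  refine ⟨isCharE1_etaTop, etaTop_mem_closure_ultra, not_isUltraE1_etaTop, ?_⟩
  exact (Set.ssubset_iff_of_subset hsub).2
    ⟨etaTop, ⟨isCharE1_etaTop, etaTop_mem_closure_ultra⟩, not_isUltraE1_etaTop⟩
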